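/- Let q(0) ∈ l^∞(ℤ) with q_n(0) = 0 for all |n| < M, and let q(t) = C(t)q(0) with C(t) = cos(t√V) = Σ_{k≥0}(-1)^k t^{2k}V^k/(2k)! the solution with zero initial velocities. Then for all t ≥ 0, |q_0(t)| ≤ (e^{α+1} α)^{2M} ‖q(0)‖_∞, where α = ω₁ t / M. -/
import Mathlib

noncomputable def Vop (ω₁ : ℝ) (q : ℤ → ℝ) : ℤ → ℝ :=
  fun k => -ω₁^2 * (q (k+1) - 2 * q k + q (k-1))

lemma Vop_iter_bound (ω₁ : ℝ) (q0 : ℤ → ℝ) (B : ℝ) (hb : ∀ n, |q0 n| ≤ B) :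
    ∀ k n, |((Vop ω₁)^[k] q0) n| ≤ (4 * ω₁^2)^k * B := by
  intro k
  induction k with
  | zero => simpa using hb
  | succ k ih =>
    intro n
    rw [Function.iterate_succ_apply']
    set g := (Vop ω₁)^[k] q0 with hg
    have e1 := abs_le.mp (ih (n+1))
    have e2 := abs_le.mp (ih n)
    have e3 := abs_le.mp (ih (n-1))
    have h1 : |g (n+1) - 2*g n + g (n-1)| ≤ 4 * ((4*ω₁^2)^k * B) := by
      rw [abs_le]; constructor <;> linarith [e1.1, e1.2, e2.1, e2.2, e3.1, e3.2]
    calc |Vop ω₁ g n| = ω₁^2 * |g (n+1) - 2*g n + g (n-1)| := by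
          simp [Vop, abs_mul, abs_of_nonneg (sq_nonneg ω₁)]
      _ ≤ ω₁^2 * (4 * ((4*ω₁^2)^k * B)) :=
          mul_le_mul_of_nonneg_left h1 (sq_nonneg ω₁)
      _ = (4*ω₁^2)^(k+1) * B := by ring

lemma Vop_iter_zero (ω₁ : ℝ) (M : ℕ) (q0 : ℤ → ℝ)
    (hq : ∀ n : ℤ, |n| < (M:ℤ) → q0 n = 0) :
    ∀ k : ℕ, ∀ n : ℤ, |n| + (k:ℤ) < (M:ℤ) → ((Vop ω₁)^[k] q0) n = 0 := by
  intro k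
  induction k with
  | zero => intro n hn; exact hq n (by simpa using hn)
  | succ k ih =>
    intro n hn
    rw [Function.iterate_succ_apply']
    push_cast at hn
    have h1 : ((Vop ω₁)^[k] q0) (n+1) = 0 := by
      refine ih (n+1) ?_
      have := abs_add_le n 1
      push_cast
      simp only [abs_one] at this
      linarith
    have h2 : ((Vop ω₁)^[k] q0) n = 0 := by
      refine ih n ?_
      push_cast
      linarith [abs_nonneg n]
    have h3 : ((Vop ω₁)^[k] q0) (n-1) = 0 := by
      refine ih (n-1) ?_
      have : |n - 1| ≤ |n| + |(1:ℤ)| := abs_sub n 1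
      simp only [abs_one] at this
      push_cast
      linarith
    simp [Vop, h1, h2, h3]

set_option maxHeartbeats 1000000 in
theorem stmt7 (ω₁ : ℝ) (hω : 0 < ω₁) (M : ℕ) (hM : 0 < M) (q0 : ℤ → ℝ) (B : ℝ)
    (hb : ∀ n, |q0 n| ≤ B)
    (hq : ∀ n : ℤ, |n| < (M : ℤ) → q0 n = 0)
    (q : ℝ → ℝ)
    (hsol : ∀ t, q t = ∑' k : ℕ,
      (-1)^k * t^(2*k) / (Nat.factorial (2*k)) * ((Vop ω₁)^[k] q0) 0) :
    ∀ t ≥ (0:ℝ),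
      |q t| ≤ (Real.exp (ω₁ * t / M + 1) * (ω₁ * t / M))^(2*M) * B := by
  intro t ht
  have hB : 0 ≤ B := le_trans (abs_nonneg _) (hb 0)
  set x : ℝ := 2 * ω₁ * t with hx
  have hx0 : 0 ≤ x := by positivity
  set α : ℝ := ω₁ * t / M with hα
  have hα0 : 0 ≤ α := by positivity
  have hMpos : (0:ℝ) < (M:ℝ) := by exact_mod_cast hM
  have hxα : x = 2 * M * α := by
    rw [hx, hα]; field_simp
  set a : ℕ → ℝ := fun k =>
    (-1)^k * t^(2*k) / (Nat.factorial (2*k)) * ((Vop ω₁)^[k] q0) 0 with ha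
  have habs : ∀ k, |a k| ≤ x^(2*k) / (Nat.factorial (2*k)) * B := by
    intro k
    have h1 := Vop_iter_bound ω₁ q0 B hb k 0
    have h2 : |a k| = t^(2*k) / (Nat.factorial (2*k)) * |((Vop ω₁)^[k] q0) 0| := by
      simp only [ha]
      rw [abs_mul, abs_div, abs_mul, abs_pow, abs_neg, abs_one, one_pow, one_mul,
        abs_pow, abs_of_nonneg ht]
      simp [Nat.abs_cast]
    rw [h2]
    have h3 : t^(2*k) / (Nat.factorial (2*k)) * |((Vop ω₁)^[k] q0) 0|
        ≤ t^(2*k) / (Nat.factorial (2*k)) * ((4*ω₁^2)^k * B) := by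
      apply mul_le_mul_of_nonneg_left h1
      positivity
    refine h3.trans (le_of_eq ?_)
    have hxt : x^(2*k) = t^(2*k) * (4*ω₁^2)^k := by
      rw [hx, pow_mul, pow_mul, ← mul_pow]
      ring_nf
    rw [hxt]; ring
  have hf : Summable (fun n : ℕ => x^n / n.factorial) := Real.summable_pow_div_factorial x
  have hfe : Summable (fun k : ℕ => x^(2*k) / Nat.factorial (2*k)) := by
    have heq : (fun k : ℕ => x^(2*k) / Nat.factorial (2*k))
        = (fun n : ℕ => x^n / n.factorial) ∘ (fun k => 2*k) := rfl
    rw [heq]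
    exact hf.comp_injective (fun a b h => by omega)
  have hfeB : Summable (fun k : ℕ => x^(2*k) / Nat.factorial (2*k) * B) :=
    hfe.mul_right B
  have hsa : Summable (fun k => |a k|) :=
    Summable.of_nonneg_of_le (fun k => abs_nonneg _) habs hfeB
  have h0 : |q t| ≤ ∑' k, |a k| := by
    have hsa2 : Summable (fun k => ‖a k‖) := by simpa [Real.norm_eq_abs] using hsa
    calc |q t| = ‖∑' k, a k‖ := by rw [hsol t, Real.norm_eq_abs]
      _ ≤ ∑' k, ‖a k‖ := norm_tsum_le_tsum_norm hsa2
      _ = ∑' k, |a k| := by simp [Real.norm_eq_abs]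
  have hzero : ∀ k < M, a k = 0 := by
    intro k hk
    have hz : ((Vop ω₁)^[k] q0) 0 = 0 := by
      apply Vop_iter_zero ω₁ M q0 hq k 0
      simpa using Int.ofNat_lt.mpr hk
    simp [ha, hz]
  have htail : ∑' k, |a k| = ∑' j, |a (j + M)| := by
    have hsum := Summable.sum_add_tsum_nat_add (f := fun k => |a k|) M hsa
    have hz : ∑ i ∈ Finset.range M, |a i| = 0 := by
      apply Finset.sum_eq_zero
      intro i hi
      rw [hzero i (Finset.mem_range.mp hi), abs_zero]
    linarith [hsum]
  have hfact : ∀ j : ℕ, ((Nat.factorial (2*M) : ℝ)) * (Nat.factorial (2*j))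
      ≤ (Nat.factorial (2*(j+M))) := by
    intro j
    have hd : Nat.factorial (2*M) * Nat.factorial (2*j) ∣ Nat.factorial (2*M + 2*j) :=
      Nat.factorial_mul_factorial_dvd_factorial_add _ _
    have hle := Nat.le_of_dvd (Nat.factorial_pos _) hd
    have h2 : 2*(j+M) = 2*M + 2*j := by ring
    rw [h2]
    exact_mod_cast hle
  have hterm : ∀ j : ℕ, |a (j + M)| ≤
      x^(2*M) / (Nat.factorial (2*M)) * B * (x^(2*j) / Nat.factorial (2*j)) := by
    intro j
    refine (habs (j+M)).trans ?_
    have hxp : x^(2*(j+M)) = x^(2*M) * x^(2*j) := by rw [← pow_add]; ring_nf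
    have e1 : x^(2*(j+M)) / (Nat.factorial (2*(j+M))) * B
        = (x^(2*M) * x^(2*j) * B) / (Nat.factorial (2*(j+M))) := by rw [hxp]; ring
    have e2 : x^(2*M) / (Nat.factorial (2*M)) * B * (x^(2*j) / Nat.factorial (2*j))
        = (x^(2*M) * x^(2*j) * B) / ((Nat.factorial (2*M) : ℝ) * (Nat.factorial (2*j))) := by
      ring
    rw [e1, e2]
    apply div_le_div_of_nonneg_left (by positivity) (by positivity) (hfact j)
  have hsum2 : Summable (fun j => x^(2*M) / (Nat.factorial (2*M)) * B *
      (x^(2*j) / Nat.factorial (2*j))) := hfe.mul_left _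
  have hsatail : Summable (fun j => |a (j + M)|) := (summable_nat_add_iff M).mpr hsa
  have h1 : ∑' j, |a (j + M)| ≤
      x^(2*M) / (Nat.factorial (2*M)) * B * ∑' j, (x^(2*j) / Nat.factorial (2*j)) := by
    rw [← tsum_mul_left]
    exact Summable.tsum_le_tsum hterm hsatail hsum2
  have hexp : ∑' j : ℕ, (x^(2*j) / Nat.factorial (2*j)) ≤ Real.exp x := by
    apply Summable.tsum_le_of_sum_range_le hfe
    intro n
    have himg : ∑ j ∈ Finset.range n, x^(2*j) / Nat.factorial (2*j)
        = ∑ i ∈ (Finset.range n).image (fun j => 2*j), x^i / Nat.factorial i := by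
      rw [Finset.sum_image (fun a _ b _ h => by omega)]
    rw [himg]
    calc ∑ i ∈ (Finset.range n).image (fun j => 2*j), x^i / Nat.factorial i
        ≤ ∑ i ∈ Finset.range (2*n), x^i / Nat.factorial i := by
          apply Finset.sum_le_sum_of_subset_of_nonneg
          · intro i hi
            simp only [Finset.mem_image, Finset.mem_range] at hi ⊢
            obtain ⟨j, hj, rfl⟩ := hi
            omega
          · intro i _ _
            positivity
      _ ≤ Real.exp x := Real.sum_le_exp_of_nonneg hx0 _
  have hfl : ((2*M : ℕ) : ℝ)^(2*M) ≤ (Nat.factorial (2*M)) * Real.exp ((2*M:ℕ):ℝ) := by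
    have h := Real.pow_div_factorial_le_exp (x := ((2*M : ℕ):ℝ)) (by positivity) (2*M)
    have hpos : (0:ℝ) < Nat.factorial (2*M) := by exact_mod_cast Nat.factorial_pos _
    rw [div_le_iff₀ hpos] at h
    linarith
  have key : x^(2*M) / (Nat.factorial (2*M)) * Real.exp x
      ≤ (Real.exp (α + 1) * α)^(2*M) := by
    have hfac : (0:ℝ) < Nat.factorial (2*M) := by exact_mod_cast Nat.factorial_pos _
    have hxM : x^(2*M) = ((2*M:ℕ):ℝ)^(2*M) * α^(2*M) := by
      rw [hxα, ← mul_pow]; push_cast; ring_nf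
    have hstep : ((2*M:ℕ):ℝ)^(2*M) / (Nat.factorial (2*M)) ≤ Real.exp ((2*M:ℕ):ℝ) := by
      rw [div_le_iff₀ hfac]
      linarith [hfl]
    have hrw : (Real.exp (α + 1) * α)^(2*M)
        = Real.exp x * Real.exp ((2*M:ℕ):ℝ) * α^(2*M) := by
      rw [mul_pow, ← Real.exp_nat_mul]
      rw [show ((2*M:ℕ):ℝ) * (α+1) = x + ((2*M:ℕ):ℝ) by rw [hxα]; push_cast; ring]
      rw [Real.exp_add]
    rw [hrw, hxM]
    calc ((2*M:ℕ):ℝ)^(2*M) * α^(2*M) / (Nat.factorial (2*M)) * Real.exp x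
        = (((2*M:ℕ):ℝ)^(2*M) / (Nat.factorial (2*M))) * (α^(2*M) * Real.exp x) := by ring
      _ ≤ Real.exp ((2*M:ℕ):ℝ) * (α^(2*M) * Real.exp x) := by
          apply mul_le_mul_of_nonneg_right hstep (by positivity)
      _ = Real.exp x * Real.exp ((2*M:ℕ):ℝ) * α^(2*M) := by ring
  calc |q t| ≤ ∑' k, |a k| := h0
    _ = ∑' j, |a (j + M)| := htail
    _ ≤ x^(2*M) / (Nat.factorial (2*M)) * B * ∑' j, (x^(2*j) / Nat.factorial (2*j)) := h1
    _ ≤ x^(2*M) / (Nat.factorial (2*M)) * B * Real.exp x := by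
        apply mul_le_mul_of_nonneg_left hexp (by positivity)
    _ = (x^(2*M) / (Nat.factorial (2*M)) * Real.exp x) * B := by ring
    _ ≤ (Real.exp (α + 1) * α)^(2*M) * B := mul_le_mul_of_nonneg_right key hB
    _ = (Real.exp (ω₁ * t / M + 1) * (ω₁ * t / M))^(2*M) * B := by rw [hα]
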